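/- Assume the a-posteriori set G_y is nonempty and let {x̃_k}_{k=0}^{N+1} ∈ G_y. Then sup_{{x_k}∈G_y} |ℓ({x_k}) − ℓ({x̃_k})| < +∞ if and only if the family {ℓ_k}_{k=0}^{N+1} belongs to L. -/

import Mathlib

open Matrix

/-!  Index conventions.  The state sequence `x_0,…,x_{N+1}` is a function
`Fin (N+2) → Fin n → ℝ`.  The disturbance sequence `f_{-1},…,f_N` and the
data `B_{-1},…,B_N`, `Q_{-1},…,Q_N` are shifted by one, so `f j`, `B j`,
`Q j` (for `j : Fin (N+2)`) stand for `f_{j-1}`, `B_{j-1}`, `Q_{j-1}`. -/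

/-- The constraint set `𝒩` of pairs `({x_k}_{0}^{N+1}, {f_k}_{-1}^{N})` with
`F_{k+1} x_{k+1} - C_k x_k = B_k f_k` (k = 0,…,N) and `F_0 x_0 = B_{-1} f_{-1}`. -/
def NSet {N m n p : ℕ} (F : Fin (N + 2) → Matrix (Fin m) (Fin n) ℝ)
    (C : Fin (N + 1) → Matrix (Fin m) (Fin n) ℝ)
    (B : Fin (N + 2) → Matrix (Fin m) (Fin p) ℝ) :
    Set ((Fin (N + 2) → Fin n → ℝ) × (Fin (N + 2) → Fin p → ℝ)) :=
  {xf | (∀ k : Fin (N + 1),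
      F k.succ *ᵥ xf.1 k.succ - C k *ᵥ xf.1 k.castSucc = B k.succ *ᵥ xf.2 k.succ) ∧
    F 0 *ᵥ xf.1 0 = B 0 *ᵥ xf.2 0}

/-- The functional
`J_y({f},{x}) = Σ_{k=-1}^{N} (Q_k f_k, f_k) + Σ_{k=0}^{N} (R_k(y_k - H_k x_k), y_k - H_k x_k)`. -/
def Jfun {N n p q : ℕ} (H : Fin (N + 1) → Matrix (Fin q) (Fin n) ℝ)
    (Q : Fin (N + 2) → Matrix (Fin p) (Fin p) ℝ)
    (R : Fin (N + 1) → Matrix (Fin q) (Fin q) ℝ)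
    (y : Fin (N + 1) → Fin q → ℝ)
    (f : Fin (N + 2) → Fin p → ℝ) (x : Fin (N + 2) → Fin n → ℝ) : ℝ :=
  (∑ j : Fin (N + 2), (Q j *ᵥ f j) ⬝ᵥ f j) +
    ∑ k : Fin (N + 1),
      (R k *ᵥ (y k - H k *ᵥ x k.castSucc)) ⬝ᵥ (y k - H k *ᵥ x k.castSucc)

/-- The a-posteriori set `G_y`. -/
def GSet {N m n p q : ℕ} (F : Fin (N + 2) → Matrix (Fin m) (Fin n) ℝ)
    (C : Fin (N + 1) → Matrix (Fin m) (Fin n) ℝ)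
    (H : Fin (N + 1) → Matrix (Fin q) (Fin n) ℝ)
    (B : Fin (N + 2) → Matrix (Fin m) (Fin p) ℝ)
    (Q : Fin (N + 2) → Matrix (Fin p) (Fin p) ℝ)
    (R : Fin (N + 1) → Matrix (Fin q) (Fin q) ℝ)
    (y : Fin (N + 1) → Fin q → ℝ) : Set (Fin (N + 2) → Fin n → ℝ) :=
  {x | ∃ f, (x, f) ∈ NSet F C B ∧ Jfun H Q R y f x ≤ 1}

/-- `ℓ({x_k}) = Σ_{k=0}^{N+1} (ℓ_k, x_k)`. -/
def lfun {N n : ℕ} (l : Fin (N + 2) → Fin n → ℝ) (x : Fin (N + 2) → Fin n → ℝ) : ℝ :=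
  ∑ k : Fin (N + 2), l k ⬝ᵥ x k

/-- Membership of the family `{ℓ_k}_{0}^{N+1}` in the set `L`: there are
`z_k ∈ ℝ^m` and `u_k ∈ ℝ^q` with `ℓ_k = F_k' z_k - C_k' z_{k+1} + H_k' u_k`
(k = 0,…,N) and `F_{N+1}' z_{N+1} = ℓ_{N+1}`. -/
def memL {N m n q : ℕ} (F : Fin (N + 2) → Matrix (Fin m) (Fin n) ℝ)
    (C : Fin (N + 1) → Matrix (Fin m) (Fin n) ℝ)
    (H : Fin (N + 1) → Matrix (Fin q) (Fin n) ℝ)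
    (l : Fin (N + 2) → Fin n → ℝ) : Prop :=
  ∃ (z : Fin (N + 2) → Fin m → ℝ) (u : Fin (N + 1) → Fin q → ℝ),
    (∀ k : Fin (N + 1),
      l k.castSucc =
        (F k.castSucc)ᵀ *ᵥ z k.castSucc - (C k)ᵀ *ᵥ z k.succ + (H k)ᵀ *ᵥ u k) ∧
    (F (Fin.last (N + 1)))ᵀ *ᵥ z (Fin.last (N + 1)) = l (Fin.last (N + 1))

/-- `lhat` is a minimax a-posteriori estimation of the linear function `lf` over `G`:
`sup_{x ∈ G} |lf x - lhat| = inf_{x̃ ∈ G} sup_{x ∈ G} |lf x - lf x̃|`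
(suprema and infima taken in the extended reals). -/
def IsMinimaxEstimate {N n : ℕ} (G : Set (Fin (N + 2) → Fin n → ℝ))
    (lf : (Fin (N + 2) → Fin n → ℝ) → ℝ) (lhat : ℝ) : Prop :=
  (⨆ x ∈ G, (↑|lf x - lhat| : EReal)) =
    ⨅ xt ∈ G, ⨆ x ∈ G, (↑|lf x - lf xt| : EReal)

/-!
Write `T x = (F₀ x₀, (F_{k+1} x_{k+1} - C_k x_k)_k, (H_k x_k)_k)`. Whether `x` lies in `G_y` depends
only on `T x`, so `x̃ + t v ∈ G_y` for every `v ∈ ker T` and every `t`; a bounded `ℓ` therefore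
kills `ker T` and factors through `T`. Writing the factor as a dot product with `(z, u)` and
summing by parts gives exactly the representation defining `L`. Conversely, for `ℓ ∈ L` the same
summation by parts gives `ℓ(x) = Σ (B_j f_j, z_j) + Σ (H_k x_k, u_k)` on `𝒩`, and `J_y ≤ 1` confines
each `f_j` and each residual `y_k - H_k x_k` to an ellipsoid, on which linear functionals are bounded.
-/

lemma transpose_mulVec_dotProduct {a b : Type*} [Fintype a] [Fintype b] (A : Matrix a b ℝ)
    (w : a → ℝ) (v : b → ℝ) : (Aᵀ *ᵥ w) ⬝ᵥ v = (A *ᵥ v) ⬝ᵥ w := by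
  rw [mulVec_transpose, ← dotProduct_mulVec, dotProduct_comm]

lemma LinearMap.exists_eq_sum_dotProduct {ι κ : Type*} [Fintype ι] [DecidableEq ι]
    [Fintype κ] [DecidableEq κ] (ψ : (ι → κ → ℝ) →ₗ[ℝ] ℝ) :
    ∃ z : ι → κ → ℝ, ∀ a, ψ a = ∑ i, a i ⬝ᵥ z i := by
  refine ⟨fun i => (dotProductEquiv ℝ κ).symm (ψ ∘ₗ LinearMap.single ℝ (fun _ => κ → ℝ) i),
    fun a => ?_⟩
  conv_lhs => rw [← Finset.univ_sum_single a]
  refine (map_sum ψ _ _).trans (Finset.sum_congr rfl fun i _ => ?_)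
  rw [dotProduct_comm, ← dotProductEquiv_apply_apply, LinearEquiv.apply_symm_apply]
  rfl

lemma Matrix.PosSemidef.mulVec_dotProduct_self_nonneg {d : Type*} [Fintype d]
    {Q : Matrix d d ℝ} (hQ : Q.PosSemidef) (v : d → ℝ) : 0 ≤ (Q *ᵥ v) ⬝ᵥ v := by
  rw [dotProduct_comm]
  exact hQ.dotProduct_mulVec_nonneg v

lemma Matrix.PosSemidef.abs_mulVec_dotProduct_le {d : Type*} [Fintype d] {Q : Matrix d d ℝ}
    (hQ : Q.PosSemidef) (a v : d → ℝ) :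
    |(Q *ᵥ a) ⬝ᵥ v| ≤ ((Q *ᵥ a) ⬝ᵥ a + (Q *ᵥ v) ⬝ᵥ v) / 2 := by
  have hQt : Qᵀ = Q := hQ.isHermitian.eq
  have hsymm : (Q *ᵥ v) ⬝ᵥ a = (Q *ᵥ a) ⬝ᵥ v := by
    rw [dotProduct_comm, dotProduct_mulVec, ← mulVec_transpose, hQt]
  have hadd := hQ.mulVec_dotProduct_self_nonneg (a + v)
  have hsub := hQ.mulVec_dotProduct_self_nonneg (a - v)
  simp only [mulVec_add, mulVec_sub, add_dotProduct, dotProduct_add, sub_dotProduct,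
    dotProduct_sub, hsymm] at hadd hsub
  rw [abs_le]
  constructor <;> linarith

lemma Matrix.PosDef.exists_abs_dotProduct_le {d : Type*} [Fintype d] [DecidableEq d]
    {Q : Matrix d d ℝ} (hQ : Q.PosDef) (w : d → ℝ) :
    ∃ M, ∀ v, (Q *ᵥ v) ⬝ᵥ v ≤ 1 → |w ⬝ᵥ v| ≤ M := by
  have hw : Q *ᵥ (Q⁻¹ *ᵥ w) = w := by
    rw [mulVec_mulVec, mul_nonsing_inv _ hQ.det_pos.ne'.isUnit, one_mulVec]
  refine ⟨(w ⬝ᵥ (Q⁻¹ *ᵥ w) + 1) / 2, fun v hv => ?_⟩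
  have := hQ.posSemidef.abs_mulVec_dotProduct_le (Q⁻¹ *ᵥ w) v
  rw [hw] at this
  linarith

lemma EReal.iSup₂_coe_lt_top_iff {α : Type*} {S : Set α} {g : α → ℝ} :
    (⨆ x ∈ S, (g x : EReal)) < ⊤ ↔ ∃ M : ℝ, ∀ x ∈ S, g x ≤ M := by
  constructor
  · intro h
    obtain ⟨M, hM, -⟩ := EReal.lt_iff_exists_real_btwn.mp h
    exact ⟨M, fun x hx => EReal.coe_le_coe_iff.mp ((le_iSup₂ (f := fun x (_ : x ∈ S) =>
      (g x : EReal)) x hx).trans hM.le)⟩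
  · rintro ⟨M, hM⟩
    exact (iSup₂_le fun x hx => EReal.coe_le_coe_iff.mpr (hM x hx)).trans_lt
      (EReal.coe_lt_top M)

lemma eq_zero_of_forall_abs_mul_le {a M : ℝ} (h : ∀ t : ℝ, |t * a| ≤ M) : a = 0 := by
  by_contra ha
  have := h ((M + 1) / a)
  rw [div_mul_cancel₀ _ ha] at this
  linarith [le_abs_self (M + 1)]

section Estimation

variable {N m n p q : ℕ} (F : Fin (N + 2) → Matrix (Fin m) (Fin n) ℝ)
  (C : Fin (N + 1) → Matrix (Fin m) (Fin n) ℝ) (H : Fin (N + 1) → Matrix (Fin q) (Fin n) ℝ)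
  (B : Fin (N + 2) → Matrix (Fin m) (Fin p) ℝ) (Q : Fin (N + 2) → Matrix (Fin p) (Fin p) ℝ)
  (R : Fin (N + 1) → Matrix (Fin q) (Fin q) ℝ) (y : Fin (N + 1) → Fin q → ℝ)

def stateResidual : (Fin (N + 2) → Fin n → ℝ) →ₗ[ℝ] Fin (N + 2) → Fin m → ℝ where
  toFun x := Fin.cons (F 0 *ᵥ x 0) fun k => F k.succ *ᵥ x k.succ - C k *ᵥ x k.castSucc
  map_add' x x' := by
    ext j : 1
    refine Fin.cases ?_ (fun k => ?_) j
    · simp [mulVec_add]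
    · simp only [Fin.cons_succ, Pi.add_apply, mulVec_add]
      abel
  map_smul' c x := by
    ext j : 1
    refine Fin.cases ?_ (fun k => ?_) j
    · simp [mulVec_smul]
    · simp [mulVec_smul, smul_sub]

def observation : (Fin (N + 2) → Fin n → ℝ) →ₗ[ℝ] Fin (N + 1) → Fin q → ℝ where
  toFun x k := H k *ᵥ x k.castSucc
  map_add' x x' := by ext k : 1; simp [mulVec_add]
  map_smul' c x := by ext k : 1; simp [mulVec_smul]

def lfunLinearMap (l : Fin (N + 2) → Fin n → ℝ) : (Fin (N + 2) → Fin n → ℝ) →ₗ[ℝ] ℝ where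
  toFun := lfun l
  map_add' x x' := by simp [lfun, dotProduct_add, Finset.sum_add_distrib]
  map_smul' c x := by simp [lfun, dotProduct_smul, Finset.mul_sum]

def dualFamily (z : Fin (N + 2) → Fin m → ℝ) (u : Fin (N + 1) → Fin q → ℝ) :
    Fin (N + 2) → Fin n → ℝ :=
  Fin.lastCases ((F (Fin.last _))ᵀ *ᵥ z (Fin.last _))
    fun k => (F k.castSucc)ᵀ *ᵥ z k.castSucc - (C k)ᵀ *ᵥ z k.succ + (H k)ᵀ *ᵥ u k

variable {F C H B Q R y}

lemma mem_NSet_iff {x : Fin (N + 2) → Fin n → ℝ} {f : Fin (N + 2) → Fin p → ℝ} :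
    (x, f) ∈ NSet F C B ↔ ∀ j, stateResidual F C x j = B j *ᵥ f j := by
  rw [Fin.forall_fin_succ]
  exact and_comm

lemma mem_GSet_of_eq {x x' : Fin (N + 2) → Fin n → ℝ} (hx : x ∈ GSet F C H B Q R y)
    (hres : stateResidual F C x' = stateResidual F C x) (hobs : observation H x' = observation H x) :
    x' ∈ GSet F C H B Q R y := by
  obtain ⟨f, hxf, hJ⟩ := hx
  refine ⟨f, mem_NSet_iff.mpr fun j => hres ▸ mem_NSet_iff.mp hxf j, ?_⟩
  have hobs' : ∀ k, H k *ᵥ x' k.castSucc = H k *ᵥ x k.castSucc := congrFun hobs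
  simpa only [Jfun, hobs'] using hJ

lemma lfun_single (l : Fin (N + 2) → Fin n → ℝ) (j : Fin (N + 2)) (v : Fin n → ℝ) :
    lfun l (Pi.single j v) = l j ⬝ᵥ v := by
  rw [lfun, Finset.sum_eq_single j (fun i _ hi => by rw [Pi.single_eq_of_ne hi, dotProduct_zero])
    (by simp), Pi.single_eq_same]

lemma lfun_injective {l l' : Fin (N + 2) → Fin n → ℝ} (h : ∀ x, lfun l x = lfun l' x) :
    l = l' :=
  funext fun j => dotProduct_eq _ _ fun v => by rw [← lfun_single, ← lfun_single, h]

lemma memL_iff {l : Fin (N + 2) → Fin n → ℝ} :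
    memL F C H l ↔ ∃ z u, l = dualFamily F C H z u := by
  refine exists₂_congr fun z u => ⟨fun ⟨hk, hlast⟩ => ?_, fun h => ⟨fun k => ?_, ?_⟩⟩
  · funext j
    refine Fin.lastCases ?_ (fun k => ?_) j
    · simp [dualFamily, hlast]
    · simp [dualFamily, hk]
  · simp [h, dualFamily]
  · simp [h, dualFamily]

lemma lfun_dualFamily (z : Fin (N + 2) → Fin m → ℝ) (u : Fin (N + 1) → Fin q → ℝ)
    (x : Fin (N + 2) → Fin n → ℝ) :
    lfun (dualFamily F C H z u) x =
      ∑ j, stateResidual F C x j ⬝ᵥ z j + ∑ k, observation H x k ⬝ᵥ u k := by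
  have hlast := Fin.sum_univ_castSucc fun j => (F j *ᵥ x j) ⬝ᵥ z j
  have hfirst := Fin.sum_univ_succ fun j => (F j *ᵥ x j) ⬝ᵥ z j
  rw [lfun, Fin.sum_univ_castSucc, Fin.sum_univ_succ (f := fun j => stateResidual F C x j ⬝ᵥ z j)]
  simp only [dualFamily, Fin.lastCases_last, Fin.lastCases_castSucc, stateResidual, observation,
    LinearMap.coe_mk, AddHom.coe_mk, Fin.cons_zero, Fin.cons_succ, add_dotProduct,
    sub_dotProduct, transpose_mulVec_dotProduct, Finset.sum_add_distrib, Finset.sum_sub_distrib]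
  linarith

lemma memL_iff_exists_lfun_eq {l : Fin (N + 2) → Fin n → ℝ} :
    memL F C H l ↔ ∃ (z : Fin (N + 2) → Fin m → ℝ) (u : Fin (N + 1) → Fin q → ℝ), ∀ x,
      lfun l x = ∑ j, stateResidual F C x j ⬝ᵥ z j + ∑ k, observation H x k ⬝ᵥ u k := by
  rw [memL_iff]
  exact exists₂_congr fun z u => ⟨fun h x => h ▸ lfun_dualFamily z u x,
    fun h => lfun_injective fun x => (h x).trans (lfun_dualFamily z u x).symm⟩

lemma forall_le_one_of_Jfun_le_one (hQ : ∀ j, (Q j).PosDef) (hR : ∀ k, (R k).PosDef)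
    {f : Fin (N + 2) → Fin p → ℝ} {x : Fin (N + 2) → Fin n → ℝ} (hJ : Jfun H Q R y f x ≤ 1) :
    (∀ j, (Q j *ᵥ f j) ⬝ᵥ f j ≤ 1) ∧
      ∀ k, (R k *ᵥ (y k - H k *ᵥ x k.castSucc)) ⬝ᵥ (y k - H k *ᵥ x k.castSucc) ≤ 1 := by
  have hf j := (hQ j).posSemidef.mulVec_dotProduct_self_nonneg (f j)
  have hr k := (hR k).posSemidef.mulVec_dotProduct_self_nonneg (y k - H k *ᵥ x k.castSucc)
  have hfsum := Finset.sum_nonneg fun j (_ : j ∈ Finset.univ) => hf j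
  have hrsum := Finset.sum_nonneg fun k (_ : k ∈ Finset.univ) => hr k
  rw [Jfun] at hJ
  exact ⟨fun j => by linarith [Finset.single_le_sum (fun i _ => hf i) (Finset.mem_univ j)],
    fun k => by linarith [Finset.single_le_sum (fun i _ => hr i) (Finset.mem_univ k)]⟩

lemma exists_abs_lfun_le_of_memL (hQ : ∀ j, (Q j).PosDef) (hR : ∀ k, (R k).PosDef)
    {l : Fin (N + 2) → Fin n → ℝ} (hl : memL F C H l) :
    ∃ M, ∀ x ∈ GSet F C H B Q R y, |lfun l x| ≤ M := by
  obtain ⟨z, u, hl⟩ := memL_iff_exists_lfun_eq.mp hl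
  choose Mf hMf using fun j => (hQ j).exists_abs_dotProduct_le ((B j)ᵀ *ᵥ z j)
  choose Mr hMr using fun k => (hR k).exists_abs_dotProduct_le (u k)
  refine ⟨∑ j, Mf j + ∑ k, (|y k ⬝ᵥ u k| + Mr k), ?_⟩
  rintro x ⟨f, hxf, hJ⟩
  obtain ⟨hf, hr⟩ := forall_le_one_of_Jfun_le_one hQ hR hJ
  rw [hl x]
  refine (abs_add_le _ _).trans (add_le_add ?_ ?_)
  · refine (Finset.abs_sum_le_sum_abs _ _).trans (Finset.sum_le_sum fun j _ => ?_)
    rw [mem_NSet_iff.mp hxf j, ← transpose_mulVec_dotProduct]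
    exact hMf j _ (hf j)
  · refine (Finset.abs_sum_le_sum_abs _ _).trans (Finset.sum_le_sum fun k _ => ?_)
    have hobs : observation H x k = y k - (y k - H k *ᵥ x k.castSucc) :=
      (sub_sub_cancel _ _).symm
    rw [hobs, sub_dotProduct, dotProduct_comm (y k - _)]
    exact (abs_sub _ _).trans (add_le_add le_rfl (hMr k _ (hr k)))

lemma memL_of_abs_sub_le {xt : Fin (N + 2) → Fin n → ℝ} (hxt : xt ∈ GSet F C H B Q R y)
    {l : Fin (N + 2) → Fin n → ℝ} {M : ℝ}
    (hM : ∀ x ∈ GSet F C H B Q R y, |lfun l x - lfun l xt| ≤ M) : memL F C H l := by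
  let T := (stateResidual F C).prod (observation H)
  have hker : LinearMap.ker T ≤ LinearMap.ker (lfunLinearMap l) := by
    intro v hv
    have hres : stateResidual F C v = 0 := congrArg Prod.fst hv
    have hobs : observation H v = 0 := congrArg Prod.snd hv
    refine eq_zero_of_forall_abs_mul_le (M := M) fun t => ?_
    have hmem : xt + t • v ∈ GSet F C H B Q R y :=
      mem_GSet_of_eq hxt (by simp [hres]) (by simp [hobs])
    have h := hM _ hmem
    change |lfunLinearMap l (xt + t • v) - lfunLinearMap l xt| ≤ M at h
    rwa [map_add, map_smul, smul_eq_mul, add_sub_cancel_left] at h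
  obtain ⟨ψ, hψ⟩ : lfunLinearMap l ∈ LinearMap.range T.dualMap := by
    rw [LinearMap.range_dualMap_eq_dualAnnihilator_ker, Submodule.mem_dualAnnihilator]
    exact fun v hv => hker hv
  obtain ⟨z, hz⟩ := (ψ ∘ₗ LinearMap.inl ℝ _ _).exists_eq_sum_dotProduct
  obtain ⟨u, hu⟩ := (ψ ∘ₗ LinearMap.inr ℝ _ _).exists_eq_sum_dotProduct
  refine memL_iff_exists_lfun_eq.mpr ⟨z, u, fun x => ?_⟩
  calc lfun l x = ψ (T x) := (LinearMap.congr_fun hψ x).symm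
    _ = (ψ ∘ₗ LinearMap.inl ℝ _ _) (stateResidual F C x)
          + (ψ ∘ₗ LinearMap.inr ℝ _ _) (observation H x) := by
        rw [LinearMap.comp_apply, LinearMap.comp_apply, ← map_add, LinearMap.inl_apply,
          LinearMap.inr_apply, Prod.mk_add_mk, add_zero, zero_add]
        rfl
    _ = _ := by rw [hz, hu]

end Estimation

theorem stmt2_general {N m n p q : ℕ}
    (F : Fin (N + 2) → Matrix (Fin m) (Fin n) ℝ)
    (C : Fin (N + 1) → Matrix (Fin m) (Fin n) ℝ)
    (H : Fin (N + 1) → Matrix (Fin q) (Fin n) ℝ)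
    (B : Fin (N + 2) → Matrix (Fin m) (Fin p) ℝ)
    (Q : Fin (N + 2) → Matrix (Fin p) (Fin p) ℝ)
    (R : Fin (N + 1) → Matrix (Fin q) (Fin q) ℝ)
    (y : Fin (N + 1) → Fin q → ℝ)
    (hQ : ∀ j, (Q j).PosDef) (hR : ∀ k, (R k).PosDef)
    (l : Fin (N + 2) → Fin n → ℝ)
    (xt : Fin (N + 2) → Fin n → ℝ) (hxt : xt ∈ GSet F C H B Q R y) :
    (⨆ x ∈ GSet F C H B Q R y, (↑|lfun l x - lfun l xt| : EReal)) < ⊤ ↔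
      memL F C H l := by
  rw [EReal.iSup₂_coe_lt_top_iff]
  constructor
  · rintro ⟨M, hM⟩
    exact memL_of_abs_sub_le hxt hM
  · intro hl
    obtain ⟨M, hM⟩ := exists_abs_lfun_le_of_memL (B := B) (y := y) hQ hR hl
    exact ⟨2 * M, fun x hx => (abs_sub _ _).trans (by linarith [hM x hx, hM xt hxt])⟩

/-- Lemma 1: for `{x̃_k} ∈ G_y ≠ ∅`,
`sup_{{x_k} ∈ G_y} |ℓ({x_k}) - ℓ({x̃_k})| < +∞ ↔ {ℓ_k} ∈ L`. -/
theorem stmt2 {N m n p q : ℕ}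
    (F : Fin (N + 2) → Matrix (Fin m) (Fin n) ℝ)
    (C : Fin (N + 1) → Matrix (Fin m) (Fin n) ℝ)
    (H : Fin (N + 1) → Matrix (Fin q) (Fin n) ℝ)
    (B : Fin (N + 2) → Matrix (Fin m) (Fin p) ℝ)
    (Q : Fin (N + 2) → Matrix (Fin p) (Fin p) ℝ)
    (R : Fin (N + 1) → Matrix (Fin q) (Fin q) ℝ)
    (y : Fin (N + 1) → Fin q → ℝ)
    (hQ : ∀ j, (Q j).PosDef) (hR : ∀ k, (R k).PosDef)
    (hG : (GSet F C H B Q R y).Nonempty)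
    (l : Fin (N + 2) → Fin n → ℝ)
    (xt : Fin (N + 2) → Fin n → ℝ) (hxt : xt ∈ GSet F C H B Q R y) :
    (⨆ x ∈ GSet F C H B Q R y, (↑|lfun l x - lfun l xt| : EReal)) < ⊤ ↔
      memL F C H l :=
  stmt2_general F C H B Q R y hQ hR l xt hxt
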